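/- arXiv:1905.01915 — 2 statements merged into one kernel-verified Lean document; each statement's English description precedes it below -/
import Mathlib

section
/- Let A = exp(𝔞) with 𝔞 abelian in Sym(V) act linearly on V. The null cone N = {x ∈ V : 0 ∈ closure(A·x)} is a finite union of linear subspaces of V; in particular N is a real algebraic subset of V, hence closed. -/
/-!
Commuting symmetric operators are simultaneously diagonalizable, so `V` is spanned by finitely
many mutually orthogonal weight spaces `E_χ`, on which `exp ξ` acts by `e^{χ(ξ)}`. Writing
`x = ∑ x_χ`, we get `⟪exp ξ x, x_χ⟫ = e^{χ(ξ)} ‖x_χ‖²`; so once `exp ξ x` is shorter than every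
nonzero component, `χ(ξ) < 0` on the whole support of `x`, and conversely then
`exp (t ξ) x → 0` as `t → ∞`. The null cone is therefore the union over `ξ` of the sums of the
weight spaces with `χ(ξ) < 0`, and there are only finitely many such sums.
-/

open RealInnerProductSpace

open Filter Topology

theorem NormedSpace.exp_apply_of_apply_eq_smul {𝕂 E : Type*} [RCLike 𝕂] [NormedAddCommGroup E]
    [NormedSpace 𝕂 E] [CompleteSpace E] {f : E →L[𝕂] E} {c : 𝕂} {v : E} (h : f v = c • v) :
    exp f v = exp c • v := by
  have hpow (n : ℕ) : (f ^ n) v = c ^ n • v := by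
    induction n with
    | zero => simp
    | succ n ih => rw [pow_succ', mul_apply_eq_comp, ih, map_smul, h, smul_smul, pow_succ]
  have hf := (exp_series_hasSum_exp' (𝕂 := 𝕂) f).mapL (ContinuousLinearMap.apply 𝕂 E v)
  have hc := (exp_series_hasSum_exp' (𝕂 := 𝕂) c).smul_const v
  simp only [ContinuousLinearMap.apply_apply, smul_apply, hpow, smul_smul] at hf
  exact hf.unique hc

theorem exp_apply_sum_of_apply_eq_smul {V ι : Type*} [NormedAddCommGroup V] [NormedSpace ℝ V]
    [CompleteSpace V] {f : V →L[ℝ] V} {s : Finset ι} {g : ι → V} {c : ι → ℝ}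
    (h : ∀ i ∈ s, f (g i) = c i • g i) :
    NormedSpace.exp f (∑ i ∈ s, g i) = ∑ i ∈ s, Real.exp (c i) • g i := by
  rw [map_sum, Real.exp_eq_exp_ℝ]
  exact Finset.sum_congr rfl fun i hi => NormedSpace.exp_apply_of_apply_eq_smul (h i hi)

theorem neg_of_norm_sum_exp_smul_lt {V ι : Type*} [NormedAddCommGroup V] [InnerProductSpace ℝ V]
    {s : Finset ι} {g : ι → V} {c : ι → ℝ} (horth : Pairwise fun i j => ⟪g i, g j⟫ = 0)
    {j : ι} (hj : j ∈ s) (hlt : ‖∑ i ∈ s, Real.exp (c i) • g i‖ < ‖g j‖) : c j < 0 := by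
  set y := ∑ i ∈ s, Real.exp (c i) • g i
  have hinner : ⟪y, g j⟫ = Real.exp (c j) * ‖g j‖ ^ 2 := by
    rw [sum_inner, Finset.sum_eq_single_of_mem j hj fun i _ hij => by
      rw [real_inner_smul_left, horth hij, mul_zero]]
    rw [real_inner_smul_left, real_inner_self_eq_norm_sq]
  have hgj : 0 < ‖g j‖ := (norm_nonneg y).trans_lt hlt
  have : Real.exp (c j) * ‖g j‖ ^ 2 < ‖g j‖ ^ 2 :=
    calc Real.exp (c j) * ‖g j‖ ^ 2 = ⟪y, g j⟫ := hinner.symm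
      _ ≤ ‖y‖ * ‖g j‖ := real_inner_le_norm y (g j)
      _ < ‖g j‖ * ‖g j‖ := mul_lt_mul_of_pos_right hlt hgj
      _ = ‖g j‖ ^ 2 := (sq _).symm
  exact Real.exp_lt_one_iff.mp ((mul_lt_iff_lt_one_left (by positivity)).mp this)

theorem exists_fin_iUnion_eq_of_finite_range {ι α β : Type*} [SetLike β α] {f : ι → β}
    (h : (Set.range f).Finite) :
    ∃ (k : ℕ) (g : Fin k → β), ⋃ i, (f i : Set α) = ⋃ j, (g j : Set α) := by
  obtain ⟨k, g, -, hg⟩ := h.fin_param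
  refine ⟨k, g, ?_⟩
  rw [← Set.biUnion_range (f := f) (g := fun b : β => (b : Set α)), ← hg, Set.biUnion_range]

namespace NullCone

variable {V : Type*} [NormedAddCommGroup V] [InnerProductSpace ℝ V]
  {𝔞 : Submodule ℝ (V →L[ℝ] V)}

variable (V 𝔞) in
def nullCone : Set V :=
  {x : V | (0 : V) ∈ closure {y : V | ∃ ξ : 𝔞, y = NormedSpace.exp (ξ : V →L[ℝ] V) x}}

variable (𝔞) in
def weightSpace (χ : 𝔞 → ℝ) : Submodule ℝ V :=
  ⨅ ξ : 𝔞, Module.End.eigenspace ((ξ : V →L[ℝ] V) : V →ₗ[ℝ] V) (χ ξ)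

theorem mem_weightSpace {χ : 𝔞 → ℝ} {v : V} :
    v ∈ weightSpace 𝔞 χ ↔ ∀ ξ : 𝔞, (ξ : V →L[ℝ] V) v = χ ξ • v := by
  simp only [weightSpace, Submodule.mem_iInf, Module.End.mem_eigenspace_iff]
  rfl

theorem exists_finset_iSup_weightSpace_eq_top [FiniteDimensional ℝ V]
    (hsym : ∀ ξ : 𝔞, ((ξ : V →L[ℝ] V) : V →ₗ[ℝ] V).IsSymmetric)
    (hcomm : ∀ ξ η : 𝔞, Commute (ξ : V →L[ℝ] V) η) :
    ∃ Φ : Finset (𝔞 → ℝ), ⨆ χ ∈ Φ, weightSpace 𝔞 χ = ⊤ := by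
  have htop : ⨆ χ, weightSpace 𝔞 χ = ⊤ :=
    LinearMap.IsSymmetric.iSup_iInf_eq_top_of_commute hsym fun ξ η _ =>
      congrArg ContinuousLinearMap.toLinearMap (hcomm ξ η)
  have hcompact : IsCompactElement (⊤ : Submodule ℝ V) :=
    (Submodule.fg_iff_compact ⊤).mp Module.Finite.fg_top
  obtain ⟨Φ, hΦ⟩ :=
    CompleteLattice.IsCompactElement.exists_finset_of_le_iSup _ hcompact (weightSpace 𝔞) htop.ge
  exact ⟨Φ, top_le_iff.mp hΦ⟩

theorem pairwise_inner_weightSpace_eq_zero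
    (hsym : ∀ ξ : 𝔞, ((ξ : V →L[ℝ] V) : V →ₗ[ℝ] V).IsSymmetric) (μ : ∀ χ, weightSpace 𝔞 χ) :
    Pairwise fun χ χ' => ⟪(μ χ : V), μ χ'⟫ = 0 := fun _ _ hne => by
  simpa using LinearMap.IsSymmetric.orthogonalFamily_iInf_eigenspaces hsym hne (μ _) (μ _)

theorem exp_smul_apply_sum_weightSpace [CompleteSpace V] (ξ : 𝔞) (t : ℝ) (s : Finset (𝔞 → ℝ))
    (μ : ∀ χ, weightSpace 𝔞 χ) :
    NormedSpace.exp ((t • ξ : 𝔞) : V →L[ℝ] V) (∑ χ ∈ s, (μ χ : V)) =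
      ∑ χ ∈ s, Real.exp (t * χ ξ) • (μ χ : V) :=
  exp_apply_sum_of_apply_eq_smul fun χ _ => by
    rw [Submodule.coe_smul, smul_apply, mem_weightSpace.mp (μ χ).2 ξ, smul_smul]

def stableSubspace (Φ : Finset (𝔞 → ℝ)) (ξ : 𝔞) : Submodule ℝ V :=
  ⨆ χ ∈ Φ.filter (fun χ => χ ξ < 0), weightSpace 𝔞 χ

theorem finite_range_stableSubspace (Φ : Finset (𝔞 → ℝ)) :
    (Set.range (stableSubspace (V := V) Φ)).Finite := by
  refine ((Φ.powerset : Set (Finset (𝔞 → ℝ))).toFinite.image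
    fun S => ⨆ χ ∈ S, weightSpace (V := V) 𝔞 χ).subset ?_
  rintro _ ⟨ξ, rfl⟩
  exact ⟨_, Finset.mem_coe.mpr (Finset.mem_powerset.mpr (Finset.filter_subset _ _)), rfl⟩

theorem tendsto_exp_smul_apply_of_mem_stableSubspace [CompleteSpace V] {Φ : Finset (𝔞 → ℝ)}
    {ξ : 𝔞} {x : V} (hx : x ∈ stableSubspace Φ ξ) :
    Tendsto (fun t : ℝ => NormedSpace.exp ((t • ξ : 𝔞) : V →L[ℝ] V) x) atTop (𝓝 0) := by
  obtain ⟨μ, rfl⟩ := (Submodule.mem_iSup_finset_iff_exists_sum _ x).mp hx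
  simp_rw [exp_smul_apply_sum_weightSpace]
  simpa using tendsto_finsetSum _ fun χ hχ =>
    (Real.tendsto_exp_atBot.comp (tendsto_id.atTop_mul_const_of_neg
      (Finset.mem_filter.mp hχ).2)).smul_const (μ χ : V)

theorem eventually_mem_stableSubspace [CompleteSpace V]
    (hsym : ∀ ξ : 𝔞, ((ξ : V →L[ℝ] V) : V →ₗ[ℝ] V).IsSymmetric) {Φ : Finset (𝔞 → ℝ)}
    (hΦ : ⨆ χ ∈ Φ, weightSpace 𝔞 χ = ⊤) (x : V) :
    ∀ᶠ y in 𝓝 (0 : V), ∀ ξ : 𝔞, y = NormedSpace.exp (ξ : V →L[ℝ] V) x →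
      x ∈ stableSubspace Φ ξ := by
  obtain ⟨μ, rfl⟩ := (Submodule.mem_iSup_finset_iff_exists_sum _ x).mp (hΦ ▸ Submodule.mem_top)
  have hsmall : ∀ᶠ y in 𝓝 (0 : V), ∀ χ ∈ Φ, (μ χ : V) ≠ 0 → ‖y‖ < ‖(μ χ : V)‖ :=
    (eventually_all_finset Φ).mpr fun χ _ => by
      by_cases h : (μ χ : V) = 0
      · simp [h]
      · filter_upwards [Metric.ball_mem_nhds 0 (norm_pos_iff.mpr h)] with y hy _
        simpa using hy
  filter_upwards [hsmall] with y hy ξ rfl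
  have hneg : ∀ χ ∈ Φ, (μ χ : V) ≠ 0 → χ ξ < 0 := fun χ hχ h => by
    have := hy χ hχ h
    rw [exp_apply_sum_of_apply_eq_smul fun χ _ => mem_weightSpace.mp (μ χ).2 ξ] at this
    exact neg_of_norm_sum_exp_smul_lt (pairwise_inner_weightSpace_eq_zero hsym μ) hχ this
  rw [← Finset.sum_filter_of_ne hneg]
  exact (Submodule.mem_iSup_finset_iff_exists_sum _ _).mpr ⟨μ, rfl⟩

theorem nullCone_eq_iUnion_stableSubspace [CompleteSpace V]
    (hsym : ∀ ξ : 𝔞, ((ξ : V →L[ℝ] V) : V →ₗ[ℝ] V).IsSymmetric) {Φ : Finset (𝔞 → ℝ)}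
    (hΦ : ⨆ χ ∈ Φ, weightSpace 𝔞 χ = ⊤) :
    nullCone V 𝔞 = ⋃ ξ : 𝔞, (stableSubspace Φ ξ : Set V) := by
  ext x
  simp only [nullCone, Set.mem_ofPred_eq, Set.mem_iUnion, SetLike.mem_coe]
  constructor
  · intro hx
    obtain ⟨y, ⟨ξ, hξ⟩, hy⟩ := ((mem_closure_iff_frequently.mp hx).and_eventually
      (eventually_mem_stableSubspace hsym hΦ x)).exists
    exact ⟨ξ, hy ξ hξ⟩
  · rintro ⟨ξ, hx⟩
    exact mem_closure_of_tendsto (tendsto_exp_smul_apply_of_mem_stableSubspace hx)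
      (Eventually.of_forall fun t => ⟨t • ξ, rfl⟩)

end NullCone

open NullCone

/-- The null cone `{x : 0 ∈ closure(A·x)}` of an abelian group `A = exp(𝔞)` of symmetric
endomorphisms is a finite union of linear subspaces of `V`; in particular it is closed. -/
theorem null_cone_abelian
    (V : Type*) [NormedAddCommGroup V] [InnerProductSpace ℝ V] [FiniteDimensional ℝ V]
    (𝔞 : Submodule ℝ (V →L[ℝ] V))
    (hsym : ∀ ξ : 𝔞, ∀ v w : V, ⟪(ξ : V →L[ℝ] V) v, w⟫ = ⟪v, (ξ : V →L[ℝ] V) w⟫)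
    (habelian : ∀ ξ η : 𝔞, (ξ : V →L[ℝ] V) * η = (η : V →L[ℝ] V) * ξ)
    (N : Set V)
    (hN : N = {x : V |
      (0 : V) ∈ closure {y : V | ∃ ξ : 𝔞, y = NormedSpace.exp (ξ : V →L[ℝ] V) x}}) :
    (∃ (k : ℕ) (W : Fin k → Submodule ℝ V), N = ⋃ i, (W i : Set V)) ∧ IsClosed N := by
  obtain ⟨Φ, hΦ⟩ := exists_finset_iSup_weightSpace_eq_top hsym habelian
  have hN' : N = ⋃ ξ : 𝔞, (stableSubspace Φ ξ : Set V) :=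
    hN.trans (nullCone_eq_iUnion_stableSubspace hsym hΦ)
  obtain ⟨k, W, hW⟩ := exists_fin_iUnion_eq_of_finite_range (finite_range_stableSubspace Φ)
  refine ⟨⟨k, W, hN'.trans hW⟩, ?_⟩
  rw [hN', hW]
  exact isClosed_iUnion_of_finite fun j => (W j).closed_of_finiteDimensional
end

section
/- The image of the gradient map μ_𝔞 : V → 𝔞^* associated to an abelian group A = exp(𝔞) acting linearly on V equals the polyhedral cone C(α_1,...,α_n) generated by all the weights, and the set {x ∈ V : μ_𝔞(closure(A·x)) = μ_𝔞(V)} is open and dense in V. -/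
/-!
In the eigenbasis `μ_𝔞(y) = ∑ ⟪v i, y⟫² α_i`, and `exp ξ` multiplies the `i`-th coordinate by
`e^{α_i(ξ)}`. Hence `μ_𝔞(V)` is the cone on all weights, and since coordinates that vanish at `x`
vanish on the closure of `A·x`, `μ_𝔞` maps that closure into the cone on the weights `α_i` with
`⟪v i, x⟫ ≠ 0`. Conversely every point `∑ t_i α_i` of this cone is attained: a minimizer of
`∑ (x_i² e^{2α_i(ξ)} / 2 - t_i α_i(ξ)) + δ‖ξ‖²` is an orbit point whose moment is `O(√δ)`-close to
the target and whose coordinates are bounded independently of `δ`, so a limit point in the orbit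
closure hits the target. The generic set is therefore the set of `x` whose support already spans
the full cone; it is open because supports can only grow under small perturbations, and dense
because it contains every `x` with all coordinates nonzero.
-/

open RealInnerProductSpace Finset Filter Topology

theorem NormedSpace.exp_apply_of_apply_eq_smul_s14 {V : Type*} [NormedAddCommGroup V]
    [NormedSpace ℝ V] [CompleteSpace V] {T : V →L[ℝ] V} {c : ℝ} {w : V} (h : T w = c • w) :
    NormedSpace.exp T w = Real.exp c • w := by
  have hpow : ∀ k : ℕ, (T ^ k) w = c ^ k • w := by
    intro k
    induction k with
    | zero => simp
    | succ k ih => rw [pow_succ', mul_apply_eq_comp, ih, map_smul, h, smul_smul,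
        pow_succ]
  have hT := (NormedSpace.exp_series_hasSum_exp' (𝕂 := ℝ) T).mapL
    (ContinuousLinearMap.apply ℝ V w)
  have hc := (NormedSpace.exp_series_hasSum_exp' (𝕂 := ℝ) c).smul_const w
  rw [← Real.exp_eq_exp_ℝ] at hc
  refine hT.unique ?_
  simpa [hpow, smul_smul] using hc

section Coordinates

variable {V : Type*} [NormedAddCommGroup V] [InnerProductSpace ℝ V] {ι : Type*} [Fintype ι]
  (v : OrthonormalBasis ι ℝ V)

theorem OrthonormalBasis.inner_sum_smul (c : ι → ℝ) (i : ι) : ⟪v i, ∑ j, c j • v j⟫ = c i := by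
  simpa using v.orthonormal.inner_right_fintype c i

theorem OrthonormalBasis.apply_eq_sum_of_apply_eq_smul {T : V →L[ℝ] V} {c : ι → ℝ}
    (h : ∀ i, T (v i) = c i • v i) (y : V) : T y = ∑ i, (c i * ⟪v i, y⟫) • v i := by
  conv_lhs => rw [← v.sum_repr' y]
  simp only [map_sum, map_smul, h, smul_smul, mul_comm]

theorem OrthonormalBasis.inner_apply_self_eq_sum_of_apply_eq_smul {T : V →L[ℝ] V} {c : ι → ℝ}
    (h : ∀ i, T (v i) = c i • v i) (y : V) : ⟪T y, y⟫ = ∑ i, ⟪v i, y⟫ ^ 2 * c i := by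
  rw [v.apply_eq_sum_of_apply_eq_smul h, sum_inner]
  refine Finset.sum_congr rfl fun i _ => ?_
  rw [real_inner_smul_left, real_inner_comm]
  ring

theorem OrthonormalBasis.exp_apply_eq_sum_of_apply_eq_smul [CompleteSpace V] {T : V →L[ℝ] V}
    {c : ι → ℝ} (h : ∀ i, T (v i) = c i • v i) (y : V) :
    NormedSpace.exp T y = ∑ i, (Real.exp (c i) * ⟪v i, y⟫) • v i :=
  v.apply_eq_sum_of_apply_eq_smul (fun i => NormedSpace.exp_apply_of_apply_eq_smul_s14 (h i)) y

end Coordinates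

noncomputable section Cone

variable {V : Type*} [NormedAddCommGroup V] [InnerProductSpace ℝ V] {ι : Type*} [Fintype ι]
  (v : OrthonormalBasis ι ℝ V) {F : Type*} [AddCommGroup F] [Module ℝ F]
  (α : ι → F →ₗ[ℝ] ℝ)

def gradientMap (y : V) : F → ℝ := fun ξ => ∑ i, ⟪v i, y⟫ ^ 2 * α i ξ

def weightCone (s : Set ι) : Set (F → ℝ) :=
  {φ | ∃ lam : ι → ℝ, (∀ i, 0 ≤ lam i) ∧ (∀ i ∉ s, lam i = 0) ∧
    φ = fun ξ => ∑ i, lam i * α i ξ}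

def coordSupport (x : V) : Set ι := {i | ⟪v i, x⟫ ≠ 0}

/-- The orbit of `x` under `exp 𝔞`, written in the eigenbasis. -/
def diagOrbit (x : V) : Set V :=
  Set.range fun ξ : F => ∑ i, (Real.exp (α i ξ) * ⟪v i, x⟫) • v i

theorem weightCone_univ :
    weightCone α Set.univ = {φ | ∃ lam : ι → ℝ, (∀ i, 0 ≤ lam i) ∧
      φ = fun ξ => ∑ i, lam i * α i ξ} := by
  simp [weightCone]

theorem weightCone_mono {s t : Set ι} (hst : s ⊆ t) : weightCone α s ⊆ weightCone α t :=
  fun _ ⟨lam, hlam, hs, hφ⟩ => ⟨lam, hlam, fun i hi => hs i fun h => hi (hst h), hφ⟩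

theorem gradientMap_mem_weightCone (y : V) :
    gradientMap v α y ∈ weightCone α (coordSupport v y) :=
  ⟨fun i => ⟪v i, y⟫ ^ 2, fun _ => sq_nonneg _,
    fun i hi => by simpa [coordSupport] using hi, rfl⟩

theorem range_gradientMap : Set.range (gradientMap v α) = weightCone α Set.univ := by
  refine (Set.range_subset_iff.2 fun y =>
    weightCone_mono α (Set.subset_univ _) (gradientMap_mem_weightCone v α y)).antisymm ?_
  rintro _ ⟨lam, hlam, -, rfl⟩
  refine ⟨∑ i, √(lam i) • v i, funext fun ξ => ?_⟩
  simp only [gradientMap, v.inner_sum_smul, Real.sq_sqrt (hlam _)]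

theorem continuous_gradientMap : Continuous (gradientMap v α) :=
  continuous_pi fun _ => continuous_finsetSum _ fun _ _ =>
    ((continuous_const.inner continuous_id).pow 2).mul continuous_const

theorem coordSupport_subset_of_mem_closure_diagOrbit {x z : V}
    (hz : z ∈ closure (diagOrbit v α x)) : coordSupport v z ⊆ coordSupport v x := by
  intro i hzi
  by_contra hxi
  have horbit : diagOrbit v α x ⊆ {y | ⟪v i, y⟫ = 0} := by
    rintro _ ⟨ξ, rfl⟩
    simp_all [coordSupport, v.inner_sum_smul]
  exact hzi (closure_minimal horbit
    (isClosed_eq (continuous_const.inner continuous_id) continuous_const) hz)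

theorem eventually_coordSupport_subset (x : V) :
    ∀ᶠ y in 𝓝 x, coordSupport v x ⊆ coordSupport v y := by
  suffices ∀ i, ∀ᶠ y in 𝓝 x, ⟪v i, x⟫ ≠ 0 → ⟪v i, y⟫ ≠ 0 from
    (eventually_all.2 this).mono fun y hy i hi => hy i hi
  intro i
  by_cases hxi : ⟪v i, x⟫ = 0
  · exact Eventually.of_forall fun _ h => (h hxi).elim
  · exact ((continuous_const.inner continuous_id).continuousAt.eventually_ne hxi).mono
      fun _ h _ => h

theorem isOpen_setOf_weightCone_coordSupport_eq :
    IsOpen {x : V | weightCone α (coordSupport v x) = weightCone α Set.univ} := by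
  refine isOpen_iff_mem_nhds.2 fun x hx => ?_
  filter_upwards [eventually_coordSupport_subset v x] with y hy
  exact (weightCone_mono α (Set.subset_univ _)).antisymm (hx ▸ weightCone_mono α hy)

theorem dense_setOf_coordSupport_eq_univ [FiniteDimensional ℝ V] :
    Dense {x : V | coordSupport v x = Set.univ} := by
  have hset : {x : V | coordSupport v x = Set.univ} = ⋂ i, ((ℝ ∙ v i)ᗮ : Set V)ᶜ := by
    ext x
    simp [coordSupport, Set.eq_univ_iff_forall, Submodule.mem_orthogonal_singleton_iff_inner_right]
  rw [hset]
  refine dense_iInter_of_isOpen (fun i => (Submodule.isClosed_orthogonal _).isOpen_compl)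
    fun i => ?_
  rw [← interior_eq_empty_iff_dense_compl, ← Set.not_nonempty_iff_eq_empty]
  intro hint
  have hvi : v i ∈ (ℝ ∙ v i)ᗮ := (Submodule.eq_top_of_nonempty_interior' _ hint).symm ▸ trivial
  simpa using Submodule.mem_orthogonal_singleton_iff_inner_right.1 hvi

theorem dense_setOf_weightCone_coordSupport_eq [FiniteDimensional ℝ V] :
    Dense {x : V | weightCone α (coordSupport v x) = weightCone α Set.univ} :=
  (dense_setOf_coordSupport_eq_univ v).mono fun x (hx : coordSupport v x = Set.univ) => by
    simp only [Set.mem_ofPred_eq, hx]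

end Cone

theorem mul_le_exp_two_mul_add {a t : ℝ} (ha : 0 ≤ a) (ht : 0 ≤ t) (hat : a = 0 → t = 0)
    (s : ℝ) : t * s ≤ a / 4 * Real.exp (2 * s) + t ^ 2 / (2 * a) := by
  rcases ha.eq_or_lt with rfl | ha
  · simp [hat rfl]
  have hrest : 0 ≤ a / 4 * Real.exp (2 * s) + t ^ 2 / (2 * a) := by positivity
  rcases le_or_gt s 0 with hs | hs
  · nlinarith
  -- `a s² / 2 ≤ a e^{2s} / 4`, and AM-GM bounds `t s` by `a s² / 2 + t² / (2a)`
  have hexp := Real.quadratic_le_exp_of_nonneg (by linarith : 0 ≤ 2 * s)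
  have hamgm : t * s ≤ a * s ^ 2 / 2 + t ^ 2 / (2 * a) := by
    have hsq : 0 ≤ (a * s - t) ^ 2 / (2 * a) := by positivity
    calc t * s ≤ t * s + (a * s - t) ^ 2 / (2 * a) := by linarith
      _ = a * s ^ 2 / 2 + t ^ 2 / (2 * a) := by field_simp; ring
  nlinarith

noncomputable section Variational

variable {ι : Type*} [Fintype ι] {E : Type*} [NormedAddCommGroup E] [InnerProductSpace ℝ E]

def expPotential (a t : ι → ℝ) (β : ι → E →L[ℝ] ℝ) (u : E) : ℝ :=
  ∑ i, (a i / 2 * Real.exp (2 * β i u) - t i * β i u)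

theorem expPotential_zero (a t : ι → ℝ) (β : ι → E →L[ℝ] ℝ) :
    expPotential a t β 0 = ∑ i, a i / 2 := by
  simp [expPotential]

theorem continuous_expPotential (a t : ι → ℝ) (β : ι → E →L[ℝ] ℝ) :
    Continuous (expPotential a t β) := by
  unfold expPotential
  fun_prop

theorem hasFDerivAt_expPotential (a t : ι → ℝ) (β : ι → E →L[ℝ] ℝ) (u : E) :
    HasFDerivAt (expPotential a t β) (∑ i, (a i * Real.exp (2 * β i u) - t i) • β i) u := by
  refine HasFDerivAt.fun_sum fun i _ => ?_
  have hβ := (β i).hasFDerivAt (x := u)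
  exact (((hβ.const_mul 2).exp.const_mul (a i / 2)).sub (hβ.const_mul (t i))).congr_fderiv
    (by module)

theorem sum_exp_sub_le_expPotential {a t : ι → ℝ} (ha : ∀ i, 0 ≤ a i) (ht : ∀ i, 0 ≤ t i)
    (hat : ∀ i, a i = 0 → t i = 0) (β : ι → E →L[ℝ] ℝ) (u : E) :
    ∑ i, a i / 4 * Real.exp (2 * β i u) - ∑ i, t i ^ 2 / (2 * a i) ≤ expPotential a t β u := by
  rw [← Finset.sum_sub_distrib]
  refine Finset.sum_le_sum fun i _ => ?_
  linarith [mul_le_exp_two_mul_add (ha i) (ht i) (hat i) (β i u)]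

/-- Minimizing `expPotential + δ‖u‖²` gives an approximate critical point of `expPotential`:
the regularization forces a minimizer to exist, and its critical point equation makes the
gradient of `expPotential` small. -/
theorem exists_bounded_near_critical [FiniteDimensional ℝ E] {a t : ι → ℝ} (ha : ∀ i, 0 ≤ a i)
    (ht : ∀ i, 0 ≤ t i) (hat : ∀ i, a i = 0 → t i = 0) (β : ι → E →L[ℝ] ℝ) :
    ∃ B, ∀ ε > 0, ∃ u : E, (∀ i, a i * Real.exp (2 * β i u) ≤ B) ∧
      ∀ w, |∑ i, (a i * Real.exp (2 * β i u) - t i) * β i w| ≤ ε * ‖w‖ := by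
  set C := ∑ i, (a i / 2 + t i ^ 2 / (2 * a i))
  have hC : 0 ≤ C := Finset.sum_nonneg fun i _ => by have := ha i; positivity
  refine ⟨4 * C, fun ε hε => ?_⟩
  set δ := ε ^ 2 / (4 * (C + 1))
  have hδ : 0 < δ := by positivity
  set f := fun u : E => expPotential a t β u + δ * ‖u‖ ^ 2
  have hf_lower : ∀ u, ∑ i, a i / 4 * Real.exp (2 * β i u) + δ * ‖u‖ ^ 2 ≤
      f u + ∑ i, t i ^ 2 / (2 * a i) := fun u => by
    linarith [sum_exp_sub_le_expPotential ha ht hat β u]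
  have hcoercive : Tendsto f (cocompact E) atTop := by
    refine tendsto_atTop_mono (fun u => ?_) ((tendsto_atTop_add_const_right _
      (-∑ i, t i ^ 2 / (2 * a i)) ((tendsto_pow_atTop two_ne_zero).const_mul_atTop hδ)).comp
        tendsto_norm_cocompact_atTop)
    have := Finset.sum_nonneg fun i (_ : i ∈ univ) =>
      mul_nonneg (div_nonneg (ha i) zero_le_four) (Real.exp_pos (2 * β i u)).le
    simp only [Function.comp_apply]
    linarith [hf_lower u]
  obtain ⟨u, hu⟩ := (show Continuous f from
    (continuous_expPotential a t β).add (by fun_prop)).exists_forall_le hcoercive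
  have hcrit : (∑ i, (a i * Real.exp (2 * β i u) - t i) • β i) + (2 * δ) • innerSL ℝ u = 0 :=
    (isMinOn_univ_iff.2 hu).isLocalMin Filter.univ_mem |>.hasFDerivAt_eq_zero <|
      (hasFDerivAt_expPotential a t β u).add <|
        ((hasStrictFDerivAt_norm_sq u).hasFDerivAt.const_mul δ).congr_fderiv (by module)
  have hbound : ∑ i, a i / 4 * Real.exp (2 * β i u) + δ * ‖u‖ ^ 2 ≤ C := by
    have := hu 0
    simp only [f, expPotential_zero, norm_zero] at this
    simp only [C, Finset.sum_add_distrib]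
    linarith [hf_lower u]
  have hsummand : ∀ i, 0 ≤ a i / 4 * Real.exp (2 * β i u) := fun i => by
    have := ha i; positivity
  refine ⟨u, fun i => ?_, fun w => ?_⟩
  · have := Finset.single_le_sum (fun j _ => hsummand j) (mem_univ i)
    nlinarith [Finset.sum_nonneg fun j (_ : j ∈ univ) => hsummand j, sq_nonneg ‖u‖]
  · have hw : ∑ i, (a i * Real.exp (2 * β i u) - t i) * β i w = -(2 * δ * ⟪u, w⟫) := by
      have := congrArg (· w) hcrit
      simp only [add_apply, _root_.sum_apply, smul_apply, smul_eq_mul, coe_innerSL_apply,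
        zero_apply] at this
      linarith
    -- `(2δ‖u‖)² = 4δ · δ‖u‖² ≤ 4δC ≤ ε²`
    have hδu : 2 * δ * ‖u‖ ≤ ε := by
      have h4δC : 4 * δ * C ≤ ε ^ 2 := by
        rw [show 4 * δ * C = ε ^ 2 * (C / (C + 1)) by simp only [δ]; field_simp]
        exact mul_le_of_le_one_right (sq_nonneg ε) ((div_le_one (by positivity)).2 (by linarith))
      nlinarith [Finset.sum_nonneg fun j (_ : j ∈ univ) => hsummand j, norm_nonneg u]
    rw [hw, abs_neg, abs_mul, abs_of_pos (by positivity : 0 < 2 * δ)]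
    calc 2 * δ * |⟪u, w⟫| ≤ 2 * δ * (‖u‖ * ‖w‖) := by
          gcongr; exact abs_real_inner_le_norm u w
      _ ≤ ε * ‖w‖ := by rw [← mul_assoc]; gcongr

end Variational

theorem exists_bounded_seq_tendsto_sum_exp {ι : Type*} [Fintype ι] {F : Type*}
    [NormedAddCommGroup F] [NormedSpace ℝ F] [FiniteDimensional ℝ F] {a t : ι → ℝ}
    (ha : ∀ i, 0 ≤ a i) (ht : ∀ i, 0 ≤ t i) (hat : ∀ i, a i = 0 → t i = 0)
    (γ : ι → F →ₗ[ℝ] ℝ) :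
    ∃ B, ∃ ξ : ℕ → F, (∀ k i, a i * Real.exp (2 * γ i (ξ k)) ≤ B) ∧
      ∀ η, Tendsto (fun k => ∑ i, a i * Real.exp (2 * γ i (ξ k)) * γ i η) atTop
        (𝓝 (∑ i, t i * γ i η)) := by
  -- `toEuclidean` supplies the inner product that the regularization `δ‖u‖²` needs
  let e := toEuclidean (E := F)
  obtain ⟨B, hB⟩ := exists_bounded_near_critical ha ht hat
    fun i => (γ i).toContinuousLinearMap.comp e.symm.toContinuousLinearMap
  choose u hu_bound hu_crit using fun k : ℕ => hB (1 / (k + 1)) Nat.one_div_pos_of_nat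
  refine ⟨B, fun k => e.symm (u k), fun k i => by simpa using hu_bound k i, fun η => ?_⟩
  rw [tendsto_iff_norm_sub_tendsto_zero]
  refine squeeze_zero (fun _ => norm_nonneg _) (fun k => ?_)
    (by simpa using tendsto_one_div_add_atTop_nhds_zero_nat.mul_const ‖e η‖)
  simpa [← Finset.sum_sub_distrib, ← sub_mul] using hu_crit k (e η)

section Orbit

variable {V : Type*} [NormedAddCommGroup V] [InnerProductSpace ℝ V] [FiniteDimensional ℝ V]
  {ι : Type*} [Fintype ι] (v : OrthonormalBasis ι ℝ V) {F : Type*} [NormedAddCommGroup F]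
  [NormedSpace ℝ F] [FiniteDimensional ℝ F] (α : ι → F →ₗ[ℝ] ℝ)

/-- Points of the cone are limits of `gradientMap` along orbit points that stay in a compact set,
so they are values of `gradientMap` on the orbit closure. -/
theorem weightCone_coordSupport_subset_image_closure_diagOrbit (x : V) :
    weightCone α (coordSupport v x) ⊆ gradientMap v α '' closure (diagOrbit v α x) := by
  rintro _ ⟨t, ht, ht_supp, rfl⟩
  obtain ⟨B, ξ, hB, hlim⟩ := exists_bounded_seq_tendsto_sum_exp (a := fun i => ⟪v i, x⟫ ^ 2)
    (fun _ => sq_nonneg _) ht (fun i hi => ht_supp i (by simpa [coordSupport] using hi)) α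
  set y : ℕ → V := fun k => ∑ i, (Real.exp (α i (ξ k)) * ⟪v i, x⟫) • v i
  have hy_sq : ∀ k i, ⟪v i, y k⟫ ^ 2 = ⟪v i, x⟫ ^ 2 * Real.exp (2 * α i (ξ k)) := fun k i => by
    rw [v.inner_sum_smul, mul_pow, ← Real.exp_nat_mul]
    push_cast
    ring
  set K := closure (diagOrbit v α x) ∩ Metric.closedBall 0 √(∑ _i : ι, B)
  have hK : IsCompact K := (isCompact_closedBall _ _).inter_left isClosed_closure
  have hyK : ∀ k, y k ∈ K := fun k => by
    refine ⟨subset_closure ⟨ξ k, rfl⟩, ?_⟩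
    rw [mem_closedBall_zero_iff, ← abs_norm]
    refine Real.abs_le_sqrt ?_
    rw [← v.sum_sq_norm_inner_right]
    exact Finset.sum_le_sum fun i _ => by simpa [hy_sq] using hB k i
  have hconv : Tendsto (fun k => gradientMap v α (y k)) atTop
      (𝓝 fun η => ∑ i, t i * α i η) :=
    tendsto_pi_nhds.2 fun η => by simpa [gradientMap, hy_sq] using hlim η
  obtain ⟨z, hzK, hz⟩ := (hK.image (continuous_gradientMap v α)).isClosed.mem_of_tendsto hconv
    (Eventually.of_forall fun k => Set.mem_image_of_mem _ (hyK k))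
  exact ⟨z, hzK.1, hz⟩

theorem gradientMap_image_closure_diagOrbit (x : V) :
    gradientMap v α '' closure (diagOrbit v α x) = weightCone α (coordSupport v x) := by
  refine subset_antisymm ?_ (weightCone_coordSupport_subset_image_closure_diagOrbit v α x)
  rintro _ ⟨z, hz, rfl⟩
  exact weightCone_mono α (coordSupport_subset_of_mem_closure_diagOrbit v α hz)
    (gradientMap_mem_weightCone v α z)

end Orbit

theorem image_gradientMap_eq_cone_and_generic_general
    (V : Type*) [NormedAddCommGroup V] [InnerProductSpace ℝ V] [FiniteDimensional ℝ V]
    (n : ℕ) (𝔞 : Submodule ℝ (V →L[ℝ] V))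
    (v : OrthonormalBasis (Fin n) ℝ V) (α : Fin n → (𝔞 →ₗ[ℝ] ℝ))
    (heig : ∀ (ξ : 𝔞) (i : Fin n), (ξ : V →L[ℝ] V) (v i) = α i ξ • v i)
    (μ : V → 𝔞 → ℝ) (hμ : ∀ (y : V) (ξ : 𝔞), μ y ξ = ⟪(ξ : V →L[ℝ] V) y, y⟫) :
    (μ '' Set.univ = {φ : 𝔞 → ℝ | ∃ lam : Fin n → ℝ, (∀ i, 0 ≤ lam i) ∧
      φ = fun ξ : 𝔞 => ∑ i, lam i * α i ξ}) ∧
    (IsOpen {x : V |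
        μ '' closure {y : V | ∃ ξ : 𝔞, y = NormedSpace.exp (ξ : V →L[ℝ] V) x} =
          μ '' Set.univ} ∧
      Dense {x : V |
        μ '' closure {y : V | ∃ ξ : 𝔞, y = NormedSpace.exp (ξ : V →L[ℝ] V) x} =
          μ '' Set.univ}) := by
  obtain rfl : μ = gradientMap v α := funext₂ fun y ξ => by
    rw [hμ, v.inner_apply_self_eq_sum_of_apply_eq_smul (heig ξ)]
    rfl
  have horbit : ∀ x, {y : V | ∃ ξ : 𝔞, y = NormedSpace.exp (ξ : V →L[ℝ] V) x} =
      diagOrbit v α x := fun x => by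
    ext y
    simp [diagOrbit, v.exp_apply_eq_sum_of_apply_eq_smul (heig _), eq_comm]
  simp only [horbit, Set.image_univ, range_gradientMap,
    gradientMap_image_closure_diagOrbit (F := 𝔞) v α]
  exact ⟨weightCone_univ α, isOpen_setOf_weightCone_coordSupport_eq v α,
    dense_setOf_weightCone_coordSupport_eq v α⟩

/-- The image of the gradient map `μ_𝔞` equals the polyhedral cone generated by all the
weights, and the set of points `x` for which `μ_𝔞(closure(A·x)) = μ_𝔞(V)` is open and dense. -/
theorem image_gradientMap_eq_cone_and_generic
    (V : Type*) [NormedAddCommGroup V] [InnerProductSpace ℝ V] [FiniteDimensional ℝ V]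
    (n : ℕ) (𝔞 : Submodule ℝ (V →L[ℝ] V))
    (habelian : ∀ ξ η : 𝔞, (ξ : V →L[ℝ] V) * η = (η : V →L[ℝ] V) * ξ)
    (v : OrthonormalBasis (Fin n) ℝ V) (α : Fin n → (𝔞 →ₗ[ℝ] ℝ))
    (heig : ∀ (ξ : 𝔞) (i : Fin n), (ξ : V →L[ℝ] V) (v i) = α i ξ • v i)
    (μ : V → 𝔞 → ℝ) (hμ : ∀ (y : V) (ξ : 𝔞), μ y ξ = ⟪(ξ : V →L[ℝ] V) y, y⟫) :
    (μ '' Set.univ = {φ : 𝔞 → ℝ | ∃ lam : Fin n → ℝ, (∀ i, 0 ≤ lam i) ∧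
      φ = fun ξ : 𝔞 => ∑ i, lam i * α i ξ}) ∧
    (IsOpen {x : V |
        μ '' closure {y : V | ∃ ξ : 𝔞, y = NormedSpace.exp (ξ : V →L[ℝ] V) x} =
          μ '' Set.univ} ∧
      Dense {x : V |
        μ '' closure {y : V | ∃ ξ : 𝔞, y = NormedSpace.exp (ξ : V →L[ℝ] V) x} =
          μ '' Set.univ}) :=
  image_gradientMap_eq_cone_and_generic_general V n 𝔞 v α heig μ hμ
end
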